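/- Let E be a complex Hilbert space, U a unitary operator on E and P an orthogonal projection on E. Then the map W_Φ on ℓ²(ℕ, E) defined by (W_Φ f)(0) = P U* f(0) and (W_Φ f)(n) = P U* f(n) + (I−P) U* f(n−1) for n ≥ 1 is a well-defined bounded linear operator and is an isometry; likewise the map W_Ψ defined by (W_Ψ f)(0) = U(I−P) f(0) and (W_Ψ f)(n) = U(I−P) f(n) + U P f(n−1) for n ≥ 1 is an isometry on ℓ²(ℕ, E). -/

import Mathlib

open ContinuousLinearMap
open scoped ENNReal

set_option linter.unusedSectionVars false

noncomputable section

/-- `W` is the analytic (degree-one) Toeplitz operator on `ℓ²(ℕ, E)` with symbol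
`φ(z) = a + z b`, i.e. `(W f)(0) = a (f 0)` and `(W f)(n) = a (f n) + b (f (n-1))`
for `n ≥ 1`. -/
def IsToeplitz {E : Type*} [NormedAddCommGroup E] [InnerProductSpace ℂ E]
    (a b : E →L[ℂ] E)
    (W : lp (fun _ : ℕ => E) 2 →L[ℂ] lp (fun _ : ℕ => E) 2) : Prop :=
  ∀ f : lp (fun _ : ℕ => E) 2,
    (W f : ∀ _ : ℕ, E) 0 = a ((f : ∀ _ : ℕ, E) 0) ∧
    ∀ n : ℕ, (W f : ∀ _ : ℕ, E) (n + 1) =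
      a ((f : ∀ _ : ℕ, E) (n + 1)) + b ((f : ∀ _ : ℕ, E) n)

/-!
The Toeplitz operator with symbol `a + z b` sends `f` to `a f + b (S f)`, where `S` is the right
shift. When `a* b = 0` the two terms are pointwise orthogonal, so
`‖W f‖² = ∑ ‖a fₙ‖² + ∑ ‖b fₙ‖²`, which equals `∑ ‖fₙ‖² = ‖f‖²` when `a* a + b* b = 1`.
An orthogonal projection `P` onto `K` gives such a pair `(P, 1 - P)`, and both conditions survive
composing on the right with the isometry `U*` and on the left with the isometry `U`.
-/

section RightShift

variable {M : Type*} [Zero M]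

def rightShift (f : ℕ → M) : ℕ → M
  | 0 => 0
  | n + 1 => f n

@[simp] lemma rightShift_zero (f : ℕ → M) : rightShift f 0 = 0 := rfl

@[simp] lemma rightShift_succ (f : ℕ → M) (n : ℕ) : rightShift f (n + 1) = f n := rfl

lemma hasSum_comp_rightShift {G : Type*} [AddCommGroup G] [TopologicalSpace G]
    [IsTopologicalAddGroup G] {g : M → G} (hg : g 0 = 0) {f : ℕ → M} {s : G}
    (h : HasSum (fun n => g (f n)) s) : HasSum (fun n => g (rightShift f n)) s := by
  rw [← hasSum_nat_add_iff' 1]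
  simpa [hg] using h

end RightShift

lemma lp.hasSum_norm_sq {ι : Type*} {G : ι → Type*} [∀ i, NormedAddCommGroup (G i)]
    (f : lp G 2) : HasSum (fun i => ‖f i‖ ^ 2) (‖f‖ ^ 2) := by
  simpa using lp.hasSum_norm (p := 2) (by norm_num) f

lemma memℓp_two_of_summable_norm_sq {ι : Type*} {G : ι → Type*} [∀ i, NormedAddCommGroup (G i)]
    {f : ∀ i, G i} (hf : Summable fun i => ‖f i‖ ^ 2) : Memℓp f 2 :=
  memℓp_gen (by simpa using hf)

section Toeplitz

variable {𝕜 E : Type*} [RCLike 𝕜] [NormedAddCommGroup E] [InnerProductSpace 𝕜 E]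

def toeplitzSeq (a b : E →L[𝕜] E) (f : ℕ → E) (n : ℕ) : E :=
  a (f n) + b (rightShift f n)

variable {a b : E →L[𝕜] E}

lemma toeplitzSeq_add (f g : ℕ → E) :
    toeplitzSeq a b (f + g) = toeplitzSeq a b f + toeplitzSeq a b g := by
  funext n
  cases n <;> simp only [toeplitzSeq, rightShift_zero, rightShift_succ, Pi.add_apply, map_add,
    map_zero] <;> abel

lemma toeplitzSeq_smul (c : 𝕜) (f : ℕ → E) :
    toeplitzSeq a b (c • f) = c • toeplitzSeq a b f := by
  funext n
  cases n <;> simp [toeplitzSeq]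

/-- `a + z b` is an inner symbol: its values on the unit circle are isometries, i.e.
`a* b = 0` and `a* a + b* b = 1`. -/
structure IsInnerSymbol (a b : E →L[𝕜] E) : Prop where
  inner_eq_zero : ∀ x y, inner 𝕜 (a x) (b y) = 0
  norm_sq_add_norm_sq : ∀ x, ‖a x‖ ^ 2 + ‖b x‖ ^ 2 = ‖x‖ ^ 2

lemma Submodule.isInnerSymbol_starProjection (K : Submodule 𝕜 E) [K.HasOrthogonalProjection] :
    IsInnerSymbol K.starProjection Kᗮ.starProjection where
  inner_eq_zero x y :=
    K.inner_right_of_mem_orthogonal (K.starProjection_apply_mem x) (Kᗮ.starProjection_apply_mem y)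
  norm_sq_add_norm_sq x := (K.norm_sq_eq_add_norm_sq_starProjection x).symm

namespace IsInnerSymbol

lemma norm_sq_fst_le (h : IsInnerSymbol a b) (x : E) : ‖a x‖ ^ 2 ≤ ‖x‖ ^ 2 := by
  rw [← h.norm_sq_add_norm_sq x]
  exact le_add_of_nonneg_right (sq_nonneg _)

lemma norm_sq_snd_le (h : IsInnerSymbol a b) (x : E) : ‖b x‖ ^ 2 ≤ ‖x‖ ^ 2 := by
  rw [← h.norm_sq_add_norm_sq x]
  exact le_add_of_nonneg_left (sq_nonneg _)

lemma symm (h : IsInnerSymbol a b) : IsInnerSymbol b a where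
  inner_eq_zero x y := inner_eq_zero_symm.mp (h.inner_eq_zero y x)
  norm_sq_add_norm_sq x := by rw [add_comm, h.norm_sq_add_norm_sq]

lemma comp_right (h : IsInnerSymbol a b) {V : E →L[𝕜] E} (hV : ∀ x, ‖V x‖ = ‖x‖) :
    IsInnerSymbol (a ∘L V) (b ∘L V) where
  inner_eq_zero x y := h.inner_eq_zero (V x) (V y)
  norm_sq_add_norm_sq x := by
    simpa only [comp_apply, hV] using h.norm_sq_add_norm_sq (V x)

lemma comp_left (h : IsInnerSymbol a b) {V : E →L[𝕜] E}
    (hV : ∀ x y, inner 𝕜 (V x) (V y) = inner 𝕜 x y) :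
    IsInnerSymbol (V ∘L a) (V ∘L b) where
  inner_eq_zero x y := by simpa only [comp_apply, hV] using h.inner_eq_zero x y
  norm_sq_add_norm_sq x := by
    have hV' : ∀ x, ‖V x‖ = ‖x‖ := (LinearMap.norm_map_iff_inner_map_map (V : E →ₗ[𝕜] E)).mpr hV
    simpa only [comp_apply, hV'] using h.norm_sq_add_norm_sq x

lemma hasSum_norm_sq_toeplitzSeq (h : IsInnerSymbol a b) {f : ℕ → E} {s : ℝ}
    (hf : HasSum (fun n => ‖f n‖ ^ 2) s) : HasSum (fun n => ‖toeplitzSeq a b f n‖ ^ 2) s := by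
  obtain ⟨sa, hsa⟩ : Summable fun n => ‖a (f n)‖ ^ 2 :=
    hf.summable.of_nonneg_of_le (fun _ => sq_nonneg _) fun n => h.norm_sq_fst_le (f n)
  obtain ⟨sb, hsb⟩ : Summable fun n => ‖b (f n)‖ ^ 2 :=
    hf.summable.of_nonneg_of_le (fun _ => sq_nonneg _) fun n => h.norm_sq_snd_le (f n)
  have hs : sa + sb = s := by
    refine (hsa.add hsb).unique ?_
    simpa only [h.norm_sq_add_norm_sq] using hf
  have hpyth : ∀ n, ‖toeplitzSeq a b f n‖ ^ 2 = ‖a (f n)‖ ^ 2 + ‖b (rightShift f n)‖ ^ 2 :=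
    fun n => by simpa only [sq, toeplitzSeq] using
      norm_add_sq_eq_norm_sq_add_norm_sq_of_inner_eq_zero _ _ (h.inner_eq_zero _ _)
  simp_rw [hpyth, ← hs]
  exact hsa.add (hasSum_comp_rightShift (g := fun x => ‖b x‖ ^ 2) (by simp) hsb)

lemma memℓp_toeplitzSeq (h : IsInnerSymbol a b) (f : lp (fun _ : ℕ => E) 2) :
    Memℓp (toeplitzSeq a b f) 2 :=
  memℓp_two_of_summable_norm_sq (h.hasSum_norm_sq_toeplitzSeq (lp.hasSum_norm_sq f)).summable

def toeplitz (h : IsInnerSymbol a b) :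
    lp (fun _ : ℕ => E) 2 →ₗᵢ[𝕜] lp (fun _ : ℕ => E) 2 where
  toFun f := ⟨toeplitzSeq a b f, h.memℓp_toeplitzSeq f⟩
  map_add' f g := lp.ext <| by simpa only [lp.coeFn_add] using toeplitzSeq_add (f : ℕ → E) g
  map_smul' c f := lp.ext <| by
    simpa only [lp.coeFn_smul, RingHom.id_apply] using toeplitzSeq_smul c (f : ℕ → E)
  norm_map' f := (pow_left_inj₀ (norm_nonneg _) (norm_nonneg _) two_ne_zero).mp <|
    (lp.hasSum_norm_sq (⟨_, h.memℓp_toeplitzSeq f⟩ : lp (fun _ : ℕ => E) 2)).unique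
      (h.hasSum_norm_sq_toeplitzSeq (lp.hasSum_norm_sq f))

end IsInnerSymbol

end Toeplitz

lemma IsInnerSymbol.exists_isToeplitz_isometry {E : Type*} [NormedAddCommGroup E]
    [InnerProductSpace ℂ E] {a b : E →L[ℂ] E} (h : IsInnerSymbol a b) :
    ∃ W : lp (fun _ : ℕ => E) 2 →L[ℂ] lp (fun _ : ℕ => E) 2, IsToeplitz a b W ∧ Isometry W :=
  ⟨h.toeplitz.toContinuousLinearMap, fun f => ⟨by simp [toeplitz, toeplitzSeq], fun _ => rfl⟩,
    h.toeplitz.isometry⟩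

/-- For a unitary `U` and an orthogonal projection `P` on a complex Hilbert space `E`,
the multiplication operator `W_Φ` on `ℓ²(ℕ, E)` with symbol `Φ(z) = (P + z(I−P)) U*`
(i.e. `(W_Φ f)(0) = P U* f(0)`, `(W_Φ f)(n) = P U* f(n) + (I−P) U* f(n−1)` for `n ≥ 1`)
is a well-defined bounded operator and an isometry; likewise for `W_Ψ` with symbol
`Ψ(z) = U((I−P) + z P)`. -/
theorem bcl_multipliers_are_isometries
    {E : Type*} [NormedAddCommGroup E] [InnerProductSpace ℂ E] [CompleteSpace E]
    (U P : E →L[ℂ] E)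
    (hU₁ : adjoint U * U = 1) (hU₂ : U * adjoint U = 1)
    (hP₁ : IsSelfAdjoint P) (hP₂ : P * P = P) :
    (∃ W : lp (fun _ : ℕ => E) 2 →L[ℂ] lp (fun _ : ℕ => E) 2,
      IsToeplitz (P ∘L adjoint U) ((1 - P) ∘L adjoint U) W ∧ Isometry W) ∧
    (∃ W : lp (fun _ : ℕ => E) 2 →L[ℂ] lp (fun _ : ℕ => E) 2,
      IsToeplitz (U ∘L (1 - P)) (U ∘L P) W ∧ Isometry W) := by
  obtain ⟨K, _, rfl⟩ := isStarProjection_iff_eq_starProjection.mp ⟨hP₂, hP₁⟩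
  have hU : U ∈ unitary (E →L[ℂ] E) := ⟨hU₁, hU₂⟩
  have hK := K.isInnerSymbol_starProjection
  rw [← K.starProjection_orthogonal']
  have hUstar_norm := norm_map_of_mem_unitary (Unitary.star_mem hU)
  exact ⟨(hK.comp_right hUstar_norm).exists_isToeplitz_isometry,
    (hK.symm.comp_left (inner_map_map_of_mem_unitary hU)).exists_isToeplitz_isometry⟩
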